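/- In the Golub–Kahan bidiagonalization setup, for every k with 1 ≤ k ≤ n−1, the LSMR rank-k approximation to AᵀA is strictly more accurate than the LSQR one: ‖AᵀA − Q_{k+1}Q_{k+1}ᵀ(AᵀA)Q_kQ_kᵀ‖ < ‖AᵀA − Q_kQ_kᵀ(AᵀA)Q_kQ_kᵀ‖. -/

import Mathlib

/-!
Conjugation by `Q` turns both sides into statements about `T = BᵀB`, a symmetric tridiagonal
matrix with nonnegative entries and positive diagonal and off-diagonals, and the coordinate
projections `Pⱼ = diag(1,…,1,0,…,0)` of rank `j`. As `T` is tridiagonal,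
`T - P_{k+1} T P_k = T (1 - P_k)`. Its norm is attained at a nonnegative unit vector `u`; the
first-order condition at `u` makes `u` vanish on the first `k` coordinates and an eigenvector of
the trailing block of `T²`, and irreducibility of `T` forces `u_k > 0`. The matrix
`E = T - P_k T P_k` agrees with `T (1 - P_k)` on `u`, so `‖E‖ ≤ ‖T (1 - P_k)‖` would make `u` a
maximizer for `E` as well; but the first-order condition for `E` fails in coordinate `k - 1`,
where `(EᵀE u)_{k-1} ≥ T_{k,k-1} (T u)_k > 0 = u_{k-1}`.
-/

open Matrix

/-- Spectral norm (largest singular value) of a real matrix. -/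
noncomputable def specNorm {a b : ℕ} (M : Matrix (Fin a) (Fin b) ℝ) : ℝ :=
  ‖LinearMap.toContinuousLinearMap (Matrix.toEuclideanLin M)‖

/-- The `j`-th largest singular value of a real matrix (`j ≥ 1`), characterized via the
Eckart–Young theorem as the minimal spectral-norm distance to matrices of rank `< j`;
it is `0` when `j` exceeds the smaller dimension. -/
noncomputable def singVal {a b : ℕ} (M : Matrix (Fin a) (Fin b) ℝ) (j : ℕ) : ℝ :=
  sInf {r : ℝ | ∃ D : Matrix (Fin a) (Fin b) ℝ, D.rank < j ∧ r = specNorm (M - D)}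

/-- The matrix of the first `k` columns of `M`. -/
def colSub {a b : ℕ} (M : Matrix (Fin a) (Fin b) ℝ) (k : ℕ) (hk : k ≤ b) :
    Matrix (Fin a) (Fin k) ℝ :=
  M.submatrix id fun j => ⟨j.1, lt_of_lt_of_le j.2 hk⟩

/-- The leading `r × c` submatrix of `M`. -/
def subUL {a b : ℕ} (M : Matrix (Fin a) (Fin b) ℝ) (r c : ℕ) (hr : r ≤ a) (hc : c ≤ b) :
    Matrix (Fin r) (Fin c) ℝ :=
  M.submatrix (fun i => ⟨i.1, lt_of_lt_of_le i.2 hr⟩) (fun j => ⟨j.1, lt_of_lt_of_le j.2 hc⟩)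

open scoped Matrix.Norms.L2Operator

section NonnegVectors

variable {ι κ : Type*} [Fintype κ]

lemma dotProduct_self_eq_norm_sq (v : κ → ℝ) : v ⬝ᵥ v = ‖WithLp.toLp 2 v‖ ^ 2 := by
  rw [EuclideanSpace.norm_sq_eq]
  simp [dotProduct, sq]

lemma dotProduct_self_nonneg (v : κ → ℝ) : 0 ≤ v ⬝ᵥ v :=
  Finset.sum_nonneg fun i _ => mul_self_nonneg (v i)

lemma dotProduct_add_smul_self (x y : κ → ℝ) (t : ℝ) :
    (x + t • y) ⬝ᵥ (x + t • y) = x ⬝ᵥ x + 2 * t * (x ⬝ᵥ y) + t ^ 2 * (y ⬝ᵥ y) := by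
  simp only [dotProduct_add, add_dotProduct, smul_dotProduct, dotProduct_smul, smul_eq_mul,
    dotProduct_comm y x]
  ring

lemma dotProduct_self_le_of_abs_le {x y : κ → ℝ} (h : ∀ i, |x i| ≤ y i) :
    x ⬝ᵥ x ≤ y ⬝ᵥ y :=
  Finset.sum_le_sum fun i _ => by
    rw [← abs_mul_abs_self (x i)]
    exact mul_self_le_mul_self (abs_nonneg _) (h i)

lemma mulVec_apply_nonneg {M : Matrix ι κ ℝ} (hM : ∀ i j, 0 ≤ M i j)
    {v : κ → ℝ} (hv : ∀ j, 0 ≤ v j) (i : ι) : 0 ≤ (M *ᵥ v) i :=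
  show 0 ≤ ∑ j, M i j * v j from Finset.sum_nonneg fun j _ => mul_nonneg (hM i j) (hv j)

lemma mul_le_mulVec_apply {M : Matrix ι κ ℝ} (hM : ∀ i j, 0 ≤ M i j)
    {v : κ → ℝ} (hv : ∀ j, 0 ≤ v j) (i : ι) (j : κ) : M i j * v j ≤ (M *ᵥ v) i :=
  Finset.single_le_sum (f := fun l => M i l * v l) (fun l _ => mul_nonneg (hM i l) (hv l))
    (Finset.mem_univ j)

lemma abs_mulVec_apply_le {M : Matrix ι κ ℝ} (hM : ∀ i j, 0 ≤ M i j)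
    (v : κ → ℝ) (i : ι) : |(M *ᵥ v) i| ≤ (M *ᵥ fun j => |v j|) i := by
  change |∑ j, M i j * v j| ≤ ∑ j, M i j * |v j|
  refine (Finset.abs_sum_le_sum_abs _ _).trans_eq (Finset.sum_congr rfl fun j _ => ?_)
  rw [abs_mul, abs_of_nonneg (hM i j)]

end NonnegVectors

section SpecNorm

variable {a b : ℕ}

lemma specNorm_eq_l2_opNorm (M : Matrix (Fin a) (Fin b) ℝ) : specNorm M = ‖M‖ := rfl

lemma specNorm_nonneg (M : Matrix (Fin a) (Fin b) ℝ) : 0 ≤ specNorm M :=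
  norm_nonneg _

lemma specNorm_pos {M : Matrix (Fin a) (Fin b) ℝ} (hM : M ≠ 0) : 0 < specNorm M := by
  rw [specNorm_eq_l2_opNorm]
  exact norm_pos_iff.2 hM

lemma mulVec_dotProduct_self_le (M : Matrix (Fin a) (Fin b) ℝ) (v : Fin b → ℝ) :
    (M *ᵥ v) ⬝ᵥ (M *ᵥ v) ≤ specNorm M ^ 2 * (v ⬝ᵥ v) := by
  rw [dotProduct_self_eq_norm_sq, dotProduct_self_eq_norm_sq, ← mul_pow, specNorm_eq_l2_opNorm]
  gcongr
  exact M.l2_opNorm_mulVec (WithLp.toLp 2 v)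

lemma exists_dotProduct_self_le_one_and_eq_specNorm_sq (M : Matrix (Fin a) (Fin b) ℝ) :
    ∃ u : Fin b → ℝ, u ⬝ᵥ u ≤ 1 ∧ (M *ᵥ u) ⬝ᵥ (M *ᵥ u) = specNorm M ^ 2 := by
  let f := LinearMap.toContinuousLinearMap (toEuclideanLin M)
  obtain ⟨x, hx, hmax⟩ :=
    (isCompact_closedBall (0 : EuclideanSpace ℝ (Fin b)) 1).exists_sSup_image_eq
      (Metric.nonempty_closedBall.2 zero_le_one) f.continuous.norm.continuousOn
  rw [f.sSup_unitClosedBall_eq_norm] at hmax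
  refine ⟨x.ofLp, ?_, ?_⟩
  · rw [dotProduct_self_eq_norm_sq]
    simpa using mem_closedBall_zero_iff.1 hx
  · rw [dotProduct_self_eq_norm_sq, specNorm, hmax]
    rfl

/-- Replacing a maximizing vector by its entrywise absolute value keeps it maximizing. -/
lemma exists_nonneg_maximizer {M : Matrix (Fin a) (Fin b) ℝ} (hM : ∀ i j, 0 ≤ M i j)
    (hM0 : M ≠ 0) :
    ∃ u : Fin b → ℝ, (∀ j, 0 ≤ u j) ∧ u ⬝ᵥ u = 1 ∧
      (M *ᵥ u) ⬝ᵥ (M *ᵥ u) = specNorm M ^ 2 := by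
  obtain ⟨v, hv, hmax⟩ := exists_dotProduct_self_le_one_and_eq_specNorm_sq M
  set u : Fin b → ℝ := fun j => |v j|
  have huv : u ⬝ᵥ u = v ⬝ᵥ v := Finset.sum_congr rfl fun j _ => abs_mul_abs_self (v j)
  have hge : specNorm M ^ 2 ≤ (M *ᵥ u) ⬝ᵥ (M *ᵥ u) :=
    hmax ▸ dotProduct_self_le_of_abs_le (abs_mulVec_apply_le hM v)
  have hle := mulVec_dotProduct_self_le M u
  have hpos := pow_pos (specNorm_pos hM0) 2
  refine ⟨u, fun j => abs_nonneg _, ?_, ?_⟩ <;> nlinarith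

/-- First-order condition at a maximizer of `‖M u‖` on the unit sphere: perturbing `u` along
`r = MᵀM u - ‖M‖² u`, which is orthogonal to `u`, would increase `‖M u‖` unless `r = 0`. -/
lemma transpose_mulVec_mulVec_of_maximizer {M : Matrix (Fin a) (Fin b) ℝ} {u : Fin b → ℝ}
    (hu : u ⬝ᵥ u = 1) (hmax : (M *ᵥ u) ⬝ᵥ (M *ᵥ u) = specNorm M ^ 2) :
    Mᵀ *ᵥ (M *ᵥ u) = specNorm M ^ 2 • u := by
  set l := specNorm M ^ 2
  set r := Mᵀ *ᵥ (M *ᵥ u) - l • u with hr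
  have hadj : ∀ w, (M *ᵥ u) ⬝ᵥ (M *ᵥ w) = (Mᵀ *ᵥ (M *ᵥ u)) ⬝ᵥ w := fun w => by
    rw [dotProduct_mulVec, mulVec_transpose]
  have hur : u ⬝ᵥ r = 0 := by
    rw [hr, dotProduct_sub, dotProduct_smul, hu, dotProduct_comm, ← hadj, hmax, smul_eq_mul,
      mul_one, sub_self]
  have hMr : (M *ᵥ u) ⬝ᵥ (M *ᵥ r) = r ⬝ᵥ r := by
    rw [hadj, show Mᵀ *ᵥ (M *ᵥ u) = r + l • u by rw [hr, sub_add_cancel], add_dotProduct,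
      smul_dotProduct, hur, smul_zero, add_zero]
  set t := 1 / (l + 1)
  have ht : 0 < t := by positivity
  have hlt : l * t ≤ 1 := by
    rw [mul_one_div, div_le_one (by positivity)]
    linarith
  have hbound := mulVec_dotProduct_self_le M (u + t • r)
  rw [mulVec_add, mulVec_smul, dotProduct_add_smul_self, dotProduct_add_smul_self, hMr, hmax,
    hu, hur] at hbound
  have hrr : t * (r ⬝ᵥ r) ≤ 0 := by
    nlinarith [dotProduct_self_nonneg (M *ᵥ r), dotProduct_self_nonneg r,
      mul_le_mul_of_nonneg_right hlt (mul_nonneg ht.le (dotProduct_self_nonneg r))]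
  have hr0 : r ⬝ᵥ r = 0 :=
    le_antisymm (nonpos_of_mul_nonpos_right hrr ht) (dotProduct_self_nonneg r)
  exact sub_eq_zero.1 (dotProduct_self_eq_zero.1 hr0)

end SpecNorm

lemma specNorm_orthogonal_conj {n : ℕ} {Q : Matrix (Fin n) (Fin n) ℝ} (hQ : Qᵀ * Q = 1)
    (X : Matrix (Fin n) (Fin n) ℝ) : specNorm (Q * X * Qᵀ) = specNorm X := by
  have hQu : Q ∈ unitary (Matrix (Fin n) (Fin n) ℝ) := by
    rw [Unitary.mem_iff, star_eq_conjTranspose, conjTranspose_eq_transpose_of_trivial]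
    exact ⟨hQ, mul_eq_one_comm.1 hQ⟩
  have hQTu : Qᵀ ∈ unitary (Matrix (Fin n) (Fin n) ℝ) := by
    simpa [star_eq_conjTranspose] using Unitary.star_mem hQu
  rw [specNorm_eq_l2_opNorm, specNorm_eq_l2_opNorm]
  exact (CStarRing.norm_mul_mem_unitary _ hQTu).trans (CStarRing.norm_mem_unitary_mul X hQu)

def leadingProj (n k : ℕ) : Matrix (Fin n) (Fin n) ℝ :=
  diagonal fun i => if (i : ℕ) < k then 1 else 0

section LeadingProj

variable {n : ℕ}

lemma sum_ite_val_lt_eq_sum_castLE {M : Type*} [AddCommMonoid M] {k : ℕ} (hk : k ≤ n)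
    (f : Fin n → M) :
    ∑ i : Fin n, (if (i : ℕ) < k then f i else 0) = ∑ i : Fin k, f (Fin.castLE hk i) := by
  have hfilter : Finset.univ.filter (fun i : Fin n => (i : ℕ) < k) =
      Finset.univ.map (Fin.castLEEmb hk) := by
    ext i
    simpa using ⟨fun h => ⟨⟨i, h⟩, rfl⟩, by rintro ⟨a, rfl⟩; exact a.2⟩
  rw [← Finset.sum_filter, hfilter, Finset.sum_map]
  rfl

lemma colSub_mul_transpose (Q : Matrix (Fin n) (Fin n) ℝ) (k : ℕ) (hk : k ≤ n) :
    colSub Q k hk * (colSub Q k hk)ᵀ = Q * leadingProj n k * Qᵀ := by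
  ext a b
  rw [mul_apply, mul_apply]
  simp only [leadingProj, mul_diagonal, transpose_apply, mul_ite, mul_one, mul_zero, ite_mul,
    zero_mul]
  rw [sum_ite_val_lt_eq_sum_castLE hk]
  rfl

lemma leadingProj_mulVec_apply (k : ℕ) (v : Fin n → ℝ) (i : Fin n) :
    (leadingProj n k *ᵥ v) i = if (i : ℕ) < k then v i else 0 := by
  simp [leadingProj, mulVec_diagonal]

lemma eq_zero_of_leadingProj_mulVec_eq_zero {k : ℕ} {u : Fin n → ℝ}
    (hu : leadingProj n k *ᵥ u = 0) {i : Fin n} (hi : (i : ℕ) < k) : u i = 0 := by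
  simpa [leadingProj_mulVec_apply, hi] using congrFun hu i

lemma leadingProj_mul_one_sub (k : ℕ) : leadingProj n k * (1 - leadingProj n k) = 0 := by
  rw [mul_sub, mul_one, leadingProj, diagonal_mul_diagonal, sub_eq_zero]
  congr 1
  ext i
  split_ifs <;> simp

lemma sub_leadingProj_mul_mul_leadingProj_apply (T : Matrix (Fin n) (Fin n) ℝ) (k : ℕ)
    (i j : Fin n) :
    (T - leadingProj n k * T * leadingProj n k) i j =
      if (i : ℕ) < k ∧ (j : ℕ) < k then 0 else T i j := by
  simp only [leadingProj, Matrix.sub_apply, mul_diagonal, diagonal_mul]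
  split_ifs <;> simp_all

end LeadingProj

structure IsNonnegJacobi {n : ℕ} (T : Matrix (Fin n) (Fin n) ℝ) : Prop where
  symm : Tᵀ = T
  nonneg : ∀ i j, 0 ≤ T i j
  diag_pos : ∀ i, 0 < T i i
  superdiag_pos : ∀ i j : Fin n, (i : ℕ) + 1 = j → 0 < T i j
  eq_zero_of_add_two_le : ∀ i j : Fin n, (j : ℕ) + 2 ≤ i → T i j = 0

namespace IsNonnegJacobi

variable {n : ℕ} {T : Matrix (Fin n) (Fin n) ℝ}

lemma subdiag_pos (hT : IsNonnegJacobi T) {i j : Fin n} (h : (j : ℕ) + 1 = i) : 0 < T i j := by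
  rw [← hT.symm, transpose_apply]
  exact hT.superdiag_pos j i h

lemma sub_leadingProj_succ_mul_mul_leadingProj (hT : IsNonnegJacobi T) (k : ℕ) :
    T - leadingProj n (k + 1) * T * leadingProj n k = T * (1 - leadingProj n k) := by
  ext i j
  simp only [leadingProj, Matrix.sub_apply, mul_diagonal, diagonal_mul, mul_sub, mul_one]
  by_cases hj : (j : ℕ) < k
  · by_cases hi : (i : ℕ) < k + 1
    · simp [hi, hj]
    · simp [hi, hj, hT.eq_zero_of_add_two_le i j (by omega)]
  · simp [hj]

lemma exists_nonneg_maximizer_mul_one_sub_leadingProj (hT : IsNonnegJacobi T) {k : ℕ}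
    (hkn : k < n) :
    ∃ u : Fin n → ℝ, (∀ j, 0 ≤ u j) ∧ u ⬝ᵥ u = 1 ∧ leadingProj n k *ᵥ u = 0 ∧
      (T *ᵥ u) ⬝ᵥ (T *ᵥ u) = specNorm (T * (1 - leadingProj n k)) ^ 2 ∧
      ∀ i : Fin n, k ≤ i →
        (T *ᵥ (T *ᵥ u)) i = specNorm (T * (1 - leadingProj n k)) ^ 2 * u i := by
  set P := leadingProj n k
  set E := T * (1 - P)
  have hE : ∀ i j, E i j = if (j : ℕ) < k then 0 else T i j := fun i j => by
    simp only [E, P, leadingProj, mul_sub, mul_one, Matrix.sub_apply, mul_diagonal]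
    split_ifs <;> simp
  have hE0 : E ≠ 0 := fun h => (hT.diag_pos ⟨k, hkn⟩).ne' <| by
    simpa [hE] using congrFun (congrFun h ⟨k, hkn⟩) ⟨k, hkn⟩
  obtain ⟨u, hu, huu, hmax⟩ := exists_nonneg_maximizer
    (fun i j => by rw [hE]; split_ifs; exacts [le_rfl, hT.nonneg i j]) hE0
  have heig := transpose_mulVec_mulVec_of_maximizer huu hmax
  have hET : Eᵀ = (1 - P) * T := by
    simp [E, P, transpose_mul, hT.symm, leadingProj]
  have hPu : P *ᵥ u = 0 := by
    have h := congrArg (P *ᵥ ·) heig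
    simp only [hET, mulVec_mulVec, ← Matrix.mul_assoc, P, leadingProj_mul_one_sub, zero_mul,
      zero_mulVec, mulVec_smul] at h
    exact (smul_eq_zero.1 h.symm).resolve_left (pow_pos (specNorm_pos hE0) 2).ne'
  have hEu : E *ᵥ u = T *ᵥ u := by
    simp [E, ← mulVec_mulVec, sub_mulVec, hPu]
  refine ⟨u, hu, huu, hPu, hEu ▸ hmax, fun i hi => ?_⟩
  have h := congrFun heig i
  rw [hEu, hET, ← mulVec_mulVec, sub_mulVec, one_mulVec, Pi.sub_apply, leadingProj_mulVec_apply,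
    if_neg (by omega), sub_zero] at h
  simpa using h

lemma apply_eq_zero_of_mulVec_mulVec_apply_eq_zero (hT : IsNonnegJacobi T) {u : Fin n → ℝ}
    (hu : ∀ j, 0 ≤ u j) {i j : Fin n} (hij : (i : ℕ) + 1 = j) (h : (T *ᵥ (T *ᵥ u)) i = 0) :
    u j = 0 := by
  have hTu := mulVec_apply_nonneg hT.nonneg hu
  have h1 : T i j * (T *ᵥ u) j ≤ 0 := h ▸ mul_le_mulVec_apply hT.nonneg hTu i j
  have h2 : T j j * u j ≤ 0 := (mul_le_mulVec_apply hT.nonneg hu j j).trans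
    (nonpos_of_mul_nonpos_right h1 (hT.superdiag_pos i j hij))
  exact le_antisymm (nonpos_of_mul_nonpos_right h2 (hT.diag_pos j)) (hu j)

/-- Irreducibility propagates a zero entry at `k` of a nonnegative eigenvector of the trailing
block of `T²` along the superdiagonal, so the eigenvector cannot vanish at `k`. -/
lemma apply_pos_of_mulVec_mulVec_eq (hT : IsNonnegJacobi T) {u : Fin n → ℝ}
    (hu : ∀ j, 0 ≤ u j) (hu0 : u ≠ 0) {k : ℕ} (hkn : k < n) (hPu : leadingProj n k *ᵥ u = 0)
    {l : ℝ} (heig : ∀ i : Fin n, k ≤ i → (T *ᵥ (T *ᵥ u)) i = l * u i) :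
    0 < u ⟨k, hkn⟩ := by
  refine (hu _).lt_of_ne fun hk => hu0 ?_
  have htail : ∀ j (hkj : k ≤ j) (hj : j < n), u ⟨j, hj⟩ = 0 := by
    intro j hkj
    induction j, hkj using Nat.le_induction with
    | base => exact fun _ => hk.symm
    | succ j hkj ih =>
      exact fun hj => hT.apply_eq_zero_of_mulVec_mulVec_apply_eq_zero hu (i := ⟨j, by omega⟩)
        rfl (by rw [heig _ hkj, ih (by omega), mul_zero])
  ext i
  by_cases hi : k ≤ i
  · exact htail i hi i.2
  · exact eq_zero_of_leadingProj_mulVec_eq_zero hPu (by omega)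

theorem specNorm_sub_leadingProj_succ_lt (hT : IsNonnegJacobi T) {k : ℕ} (hk : 1 ≤ k)
    (hkn : k < n) :
    specNorm (T - leadingProj n (k + 1) * T * leadingProj n k) <
      specNorm (T - leadingProj n k * T * leadingProj n k) := by
  rw [hT.sub_leadingProj_succ_mul_mul_leadingProj]
  obtain ⟨u, hu, huu, hPu, hmax, heig⟩ :=
    hT.exists_nonneg_maximizer_mul_one_sub_leadingProj hkn
  have huk : 0 < u ⟨k, hkn⟩ :=
    hT.apply_pos_of_mulVec_mulVec_eq hu (fun h => by simp [h] at huu) hkn hPu heig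
  set E := T - leadingProj n k * T * leadingProj n k
  have hE : ∀ i j, E i j = if (i : ℕ) < k ∧ (j : ℕ) < k then 0 else T i j :=
    sub_leadingProj_mul_mul_leadingProj_apply T k
  have hEu : E *ᵥ u = T *ᵥ u := by
    simp [E, sub_mulVec, ← mulVec_mulVec, hPu]
  have hET : ∀ i j, 0 ≤ Eᵀ i j := fun i j => by
    rw [transpose_apply, hE]
    split_ifs
    exacts [le_rfl, hT.nonneg j i]
  by_contra! hle
  have hEmax : (E *ᵥ u) ⬝ᵥ (E *ᵥ u) = specNorm E ^ 2 := by
    refine le_antisymm (by simpa [huu] using mulVec_dotProduct_self_le E u) ?_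
    rw [hEu, hmax]
    gcongr
    exact specNorm_nonneg E
  set k' : Fin n := ⟨k - 1, by omega⟩
  have hEk : Eᵀ k' ⟨k, hkn⟩ = T ⟨k, hkn⟩ k' := by
    rw [transpose_apply, hE, if_neg (by simp)]
  have hpos : 0 < Eᵀ k' ⟨k, hkn⟩ * (E *ᵥ u) ⟨k, hkn⟩ := by
    rw [hEk, hEu]
    exact mul_pos (hT.subdiag_pos (by simp [k']; omega))
      ((mul_pos (hT.diag_pos _) huk).trans_le (mul_le_mulVec_apply hT.nonneg hu _ _))
  have hzero : (Eᵀ *ᵥ (E *ᵥ u)) k' = 0 := by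
    rw [transpose_mulVec_mulVec_of_maximizer huu hEmax, Pi.smul_apply,
      eq_zero_of_leadingProj_mulVec_eq_zero hPu (by simp [k']; omega), smul_zero]
  exact (hpos.trans_le (mul_le_mulVec_apply hET
    (hEu ▸ mulVec_apply_nonneg hT.nonneg hu) k' _)).ne' hzero

end IsNonnegJacobi

lemma isNonnegJacobi_transpose_mul_self {n : ℕ} {α β : Fin n → ℝ} (hα : ∀ i, 0 < α i)
    (hβ : ∀ i, 0 < β i) {B : Matrix (Fin (n + 1)) (Fin n) ℝ}
    (hB : ∀ (i : Fin (n + 1)) (j : Fin n),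
      B i j = if (i : ℕ) = (j : ℕ) then α j else if (i : ℕ) = (j : ℕ) + 1 then β j else 0) :
    IsNonnegJacobi (Bᵀ * B) := by
  have hB0 : ∀ i j, 0 ≤ Bᵀ i j := fun i j => by
    rw [transpose_apply, hB]
    split_ifs
    exacts [(hα i).le, (hβ i).le, le_rfl]
  have hle : ∀ i j l, Bᵀ i l * B l j ≤ (Bᵀ * B) i j := fun i j l =>
    Finset.single_le_sum (f := fun l => Bᵀ i l * B l j)
      (fun l _ => mul_nonneg (hB0 i l) (hB0 j l)) (Finset.mem_univ l)
  refine ⟨by rw [transpose_mul, transpose_transpose],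
    fun i j => (hle i j 0).trans' (mul_nonneg (hB0 i 0) (hB0 j 0)),
    fun i => (mul_pos (hα i) (hα i)).trans_le ((hle i i i.castSucc).trans_eq' ?_),
    fun i j hij => (mul_pos (hβ i) (hα j)).trans_le ((hle i j j.castSucc).trans_eq' ?_),
    fun i j hij => ?_⟩
  · simp [hB]
  · simp [hB, ← hij]
  · refine (mul_apply ..).trans (Finset.sum_eq_zero fun l _ => ?_)
    rw [transpose_apply, hB, hB]
    split_ifs <;> first | omega | simp

/-- the LSMR rank-`k` approximation to `AᵀA` is strictly more accurate than
the LSQR one: `‖AᵀA - Q_{k+1}Q_{k+1}ᵀ(AᵀA)Q_kQ_kᵀ‖ < ‖AᵀA - Q_kQ_kᵀ(AᵀA)Q_kQ_kᵀ‖`. -/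
theorem lsmr_rank_k_approx_more_accurate_than_lsqr
    (m n : ℕ)
    (A : Matrix (Fin m) (Fin n) ℝ)
    (P : Matrix (Fin m) (Fin (n + 1)) ℝ) (hP : Pᵀ * P = 1)
    (Q : Matrix (Fin n) (Fin n) ℝ) (hQ : Qᵀ * Q = 1)
    (α : Fin n → ℝ) (hα : ∀ i, 0 < α i)
    (β : Fin n → ℝ) (hβ : ∀ i, 0 < β i)
    (B : Matrix (Fin (n + 1)) (Fin n) ℝ)
    (hB : ∀ (i : Fin (n + 1)) (j : Fin n),
      B i j = if (i : ℕ) = (j : ℕ) then α j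
        else if (i : ℕ) = (j : ℕ) + 1 then β j else 0)
    (hA : A = P * B * Qᵀ)
    (k : ℕ) (hk1 : 1 ≤ k) (hk2 : k ≤ n - 1) :
    specNorm (Aᵀ * A -
        colSub Q (k + 1) (by omega) * (colSub Q (k + 1) (by omega))ᵀ * (Aᵀ * A) *
          (colSub Q k (by omega) * (colSub Q k (by omega))ᵀ)) <
      specNorm (Aᵀ * A -
        colSub Q k (by omega) * (colSub Q k (by omega))ᵀ * (Aᵀ * A) *
          (colSub Q k (by omega) * (colSub Q k (by omega))ᵀ)) := by
  have hAA : Aᵀ * A = Q * (Bᵀ * B) * Qᵀ := by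
    rw [hA]
    simp only [transpose_mul, transpose_transpose, Matrix.mul_assoc]
    rw [← Matrix.mul_assoc Pᵀ P, hP, Matrix.one_mul]
  have hconj : ∀ X Y : Matrix (Fin n) (Fin n) ℝ,
      Q * X * Qᵀ * (Q * Y * Qᵀ) = Q * (X * Y) * Qᵀ := fun X Y => by
    simp only [Matrix.mul_assoc, ← Matrix.mul_assoc Qᵀ Q, hQ, Matrix.one_mul]
  simp only [colSub_mul_transpose, hAA, hconj, ← sub_mul, ← mul_sub, specNorm_orthogonal_conj hQ]
  exact (isNonnegJacobi_transpose_mul_self hα hβ hB).specNorm_sub_leadingProj_succ_lt hk1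
    (by omega)
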